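/- arXiv:2307.10163 — 4 statements merged into one kernel-verified Lean document; each statement's English description precedes it below -/
import Mathlib

section
/- For every c ∈ (0, 1/2] there exists a constant K > 0 such that for all integers n ≥ 2 and p with 0 < p < n, and every real α with c ≤ α ≤ 1 − c for which αn and αp are integers (hence α(n−p) is an integer), one has C(p, αp) · C(n − p, α(n−p)) / C(n, αn) ≥ K / √n. Equivalently, for S' drawn uniformly from the αn-element subsets of an n-element set and Φ a p-element subset, Pr[|S' ∩ Φ| = αp] ≥ K / √n. -/
/-!
The ratio is the hypergeometric probability `(a+b)! (c+d)! (a+c)! (b+d)! / (a! b! c! d! N!)` of the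
2×2 table with cells `a = αp`, `b = (1-α)p`, `c = α(n-p)`, `d = (1-α)(n-p)`. Write every factorial
as `k! = s k · √(2k) · (k/e)^k` with `√π ≤ s k ≤ 2`. Since both rows have the same proportion `α`,
the factors `k^k` and `e^{-k}` cancel exactly, the factors `s k` contribute at least `π²/32`, and
the factors `√(2k)` contribute `√((a+b)(c+d)(a+c)(b+d) / (2abcd N)) ≥ √(8/N)` by AM-GM.
-/

open Real Stirling
open scoped Nat

namespace Stirling

lemma stirlingSeq_le_two {n : ℕ} (hn : n ≠ 0) : stirlingSeq n ≤ 2 := by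
  obtain ⟨k, rfl⟩ := Nat.exists_eq_succ_of_ne_zero hn
  calc stirlingSeq (k + 1) ≤ stirlingSeq 1 := stirlingSeq'_antitone (Nat.zero_le k)
    _ = exp 1 / √2 := stirlingSeq_one
    _ ≤ 2 := by
      have : (1.41 : ℝ) ≤ √2 := Real.le_sqrt_of_sq_le (by norm_num)
      rw [div_le_iff₀ (by positivity)]
      linarith [exp_one_lt_d9]

lemma factorial_eq_stirlingSeq_mul {n : ℕ} (hn : n ≠ 0) :
    (n ! : ℝ) = stirlingSeq n * (√(2 * n) * (n / exp 1) ^ n) := by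
  rw [stirlingSeq, div_mul_cancel₀]
  have : (0 : ℝ) < n := by exact_mod_cast Nat.pos_of_ne_zero hn
  positivity

end Stirling

lemma sixteen_mul_le_add_mul_add_mul_add_mul_add {x y z w : ℝ}
    (hx : 0 ≤ x) (hy : 0 ≤ y) (hz : 0 ≤ z) (hw : 0 ≤ w) :
    16 * (x * y * z * w) ≤ (x + y) * (z + w) * (x + z) * (y + w) := by
  nlinarith [sq_nonneg (x * w - y * z), mul_nonneg (mul_nonneg hx hy) (sq_nonneg (z - w)),
    mul_nonneg (mul_nonneg hz hw) (sq_nonneg (x - y)),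
    mul_nonneg (mul_nonneg hx hz) (sq_nonneg (y - w)),
    mul_nonneg (mul_nonneg hy hw) (sq_nonneg (x - z)),
    mul_nonneg (mul_nonneg hx hw) (sq_nonneg (y - z)),
    mul_nonneg (mul_nonneg hy hz) (sq_nonneg (x - w))]

noncomputable def tableRatio (f : ℕ → ℝ) (a b c d : ℕ) : ℝ :=
  f (a + b) * f (c + d) * f (a + c) * f (b + d) / (f a * f b * f c * f d * f (a + b + c + d))

section tableRatio

variable {a b c d : ℕ}

lemma ne_zero_and_ne_zero_of_cast_eq_mul {α : ℝ} (hα0 : 0 < α) (hα1 : α < 1)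
    (ha : (a : ℝ) = α * (a + b)) (hab : a + b ≠ 0) : a ≠ 0 ∧ b ≠ 0 := by
  have hpos : (0 : ℝ) < a + b := by exact_mod_cast Nat.pos_of_ne_zero hab
  have ha' : (0 : ℝ) < a := ha ▸ mul_pos hα0 hpos
  have hb' : (0 : ℝ) < b := by linarith [mul_pos (sub_pos.2 hα1) hpos]
  exact ⟨by exact_mod_cast ha'.ne', by exact_mod_cast hb'.ne'⟩

lemma cast_choose_mul_choose_div_choose :
    (((a + b).choose a * (c + d).choose c : ℕ) : ℝ) / ((a + b + c + d).choose (a + c) : ℕ)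
      = tableRatio (fun k => (k ! : ℝ)) a b c d := by
  have hN : a + b + c + d = (a + c) + (b + d) := by omega
  rw [Nat.cast_mul, Nat.cast_add_choose, Nat.cast_add_choose, hN, Nat.cast_add_choose, ← hN,
    tableRatio]
  field_simp

lemma tableRatio_congr {f g : ℕ → ℝ} (h : ∀ k ≠ 0, f k = g k)
    (ha : a ≠ 0) (hb : b ≠ 0) (hc : c ≠ 0) (hd : d ≠ 0) :
    tableRatio f a b c d = tableRatio g a b c d := by
  simp only [tableRatio, h a ha, h b hb, h c hc, h d hd, h (a + b) (by omega),
    h (c + d) (by omega), h (a + c) (by omega), h (b + d) (by omega),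
    h (a + b + c + d) (by omega)]

lemma tableRatio_mul (f g : ℕ → ℝ) :
    tableRatio (f * g) a b c d = tableRatio f a b c d * tableRatio g a b c d := by
  simp only [tableRatio, Pi.mul_apply]
  ring

lemma tableRatio_pow {x : ℝ} (hx : x ≠ 0) :
    tableRatio (fun k => x ^ k) a b c d = 1 := by
  rw [tableRatio, div_eq_one_iff_eq (by positivity)]
  simp only [← pow_add]
  congr 1
  omega

lemma tableRatio_sqrt {f : ℕ → ℝ} (hf : ∀ k, 0 ≤ f k) :
    tableRatio (fun k => √(f k)) a b c d = √(tableRatio f a b c d) := by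
  rw [tableRatio, tableRatio, Real.sqrt_div' _ (by apply_rules [mul_nonneg])]
  simp only [Real.sqrt_mul' _ (hf _)]

lemma pow_self_mul_pow_self {α : ℝ} (ha : (a : ℝ) = α * (a + b)) :
    (a : ℝ) ^ a * (b : ℝ) ^ b = α ^ a * (1 - α) ^ b * ((a + b : ℕ) : ℝ) ^ (a + b) := by
  have hb : (b : ℝ) = (1 - α) * (a + b) := by linarith
  calc (a : ℝ) ^ a * (b : ℝ) ^ b = (α * (a + b)) ^ a * ((1 - α) * (a + b)) ^ b := by
        rw [← ha, ← hb]
    _ = _ := by rw [mul_pow, mul_pow, pow_add]; push_cast; ring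

lemma tableRatio_pow_self {α : ℝ} (ha : (a : ℝ) = α * (a + b)) (hc : (c : ℝ) = α * (c + d)) :
    tableRatio (fun k => (k : ℝ) ^ k) a b c d = 1 := by
  have hac : ((a + c : ℕ) : ℝ) = α * ((a + c : ℕ) + (b + d : ℕ)) := by push_cast; linarith
  have hcols := pow_self_mul_pow_self hac
  rw [show a + c + (b + d) = a + b + c + d by omega] at hcols
  have hrow₁ := pow_self_mul_pow_self ha
  have hrow₂ := pow_self_mul_pow_self hc
  have hne : ∀ k : ℕ, (k : ℝ) ^ k ≠ 0 := fun k => by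
    rcases k.eq_zero_or_pos with rfl | hk
    · simp
    · positivity
  rw [tableRatio, div_eq_one_iff_eq (by simp only [ne_eq, mul_eq_zero, hne, or_self,
    not_false_eq_true])]
  push_cast at hcols hrow₁ hrow₂ ⊢
  linear_combination ((a + b : ℝ) ^ (a + b) * (c + d : ℝ) ^ (c + d)) * hcols
    - ((a + b + c + d : ℝ) ^ (a + b + c + d) * ((c : ℝ) ^ c * (d : ℝ) ^ d)) * hrow₁
    - ((a + b + c + d : ℝ) ^ (a + b + c + d) * (α ^ a * (1 - α) ^ b * (a + b : ℝ) ^ (a + b)))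
      * hrow₂

lemma eight_div_le_tableRatio_two_mul (ha : a ≠ 0) (hb : b ≠ 0) (hc : c ≠ 0) (hd : d ≠ 0) :
    8 / ((a + b + c + d : ℕ) : ℝ) ≤ tableRatio (fun k => 2 * (k : ℝ)) a b c d := by
  have ha' : (0 : ℝ) < a := by exact_mod_cast Nat.pos_of_ne_zero ha
  have hb' : (0 : ℝ) < b := by exact_mod_cast Nat.pos_of_ne_zero hb
  have hc' : (0 : ℝ) < c := by exact_mod_cast Nat.pos_of_ne_zero hc
  have hd' : (0 : ℝ) < d := by exact_mod_cast Nat.pos_of_ne_zero hd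
  have h := sixteen_mul_le_add_mul_add_mul_add_mul_add ha'.le hb'.le hc'.le hd'.le
  rw [tableRatio, div_le_div_iff₀ (by positivity) (by positivity)]
  push_cast
  nlinarith [mul_le_mul_of_nonneg_left h (by positivity : (0 : ℝ) ≤ 256 * (a + b + c + d))]

lemma pi_sq_div_le_tableRatio_stirlingSeq (ha : a ≠ 0) (hb : b ≠ 0) (hc : c ≠ 0) (hd : d ≠ 0) :
    π ^ 2 / 32 ≤ tableRatio stirlingSeq a b c d := by
  have hlow : ∀ {k}, k ≠ 0 → √π ≤ stirlingSeq k := sqrt_pi_le_stirlingSeq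
  have hpos : ∀ {k}, k ≠ 0 → 0 < stirlingSeq k :=
    fun hk => (Real.sqrt_pos.2 pi_pos).trans_le (hlow hk)
  have hnum : π ^ 2 ≤ stirlingSeq (a + b) * stirlingSeq (c + d) * stirlingSeq (a + c) *
      stirlingSeq (b + d) :=
    calc π ^ 2 = √π * √π * √π * √π := by
          rw [mul_assoc _ √π, Real.mul_self_sqrt pi_pos.le]; ring
      _ ≤ _ := by
        refine mul_le_mul_of_nonneg (mul_le_mul_of_nonneg (mul_le_mul_of_nonneg (hlow ?_)
          (hlow ?_) ?_ ?_) (hlow ?_) ?_ ?_) (hlow ?_) ?_ ?_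
        all_goals first | omega | positivity | exact (hpos (by omega)).le
  have hden : stirlingSeq a * stirlingSeq b * stirlingSeq c * stirlingSeq d *
      stirlingSeq (a + b + c + d) ≤ 32 :=
    calc _ ≤ (2 : ℝ) * 2 * 2 * 2 * 2 := by
          gcongr
          all_goals first
            | exact stirlingSeq_le_two (by omega)
            | exact (hpos (by omega)).le
      _ = 32 := by norm_num
  refine div_le_div₀ ((sq_nonneg π).trans hnum) hnum ?_ hden
  exact mul_pos (mul_pos (mul_pos (mul_pos (hpos ha) (hpos hb)) (hpos hc)) (hpos hd))
    (hpos (by omega))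

lemma div_sqrt_le_tableRatio_factorial {α : ℝ}
    (ha0 : a ≠ 0) (hb0 : b ≠ 0) (hc0 : c ≠ 0) (hd0 : d ≠ 0)
    (ha : (a : ℝ) = α * (a + b)) (hc : (c : ℝ) = α * (c + d)) :
    π ^ 2 * √8 / 32 / √((a + b + c + d : ℕ) : ℝ) ≤ tableRatio (fun k => (k ! : ℝ)) a b c d := by
  have hsplit : tableRatio (fun k => (k ! : ℝ)) a b c d = tableRatio stirlingSeq a b c d *
      tableRatio (fun k => √(2 * k)) a b c d * tableRatio (fun k => (k : ℝ) ^ k) a b c d *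
      tableRatio (fun k => (exp 1)⁻¹ ^ k) a b c d := by
    rw [← tableRatio_mul, ← tableRatio_mul, ← tableRatio_mul]
    refine tableRatio_congr (fun k hk => ?_) ha0 hb0 hc0 hd0
    rw [factorial_eq_stirlingSeq_mul hk, div_eq_mul_inv, mul_pow]
    simp only [Pi.mul_apply]
    ring
  have hstirling := pi_sq_div_le_tableRatio_stirlingSeq ha0 hb0 hc0 hd0
  rw [hsplit, tableRatio_pow_self ha hc, tableRatio_pow (inv_ne_zero (exp_ne_zero 1)),
    tableRatio_sqrt (fun k => by positivity), mul_one, mul_one]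
  calc π ^ 2 * √8 / 32 / √((a + b + c + d : ℕ) : ℝ)
      = π ^ 2 / 32 * √(8 / ((a + b + c + d : ℕ) : ℝ)) := by
        rw [Real.sqrt_div' _ (by positivity)]; ring
    _ ≤ _ := mul_le_mul hstirling
        (Real.sqrt_le_sqrt (eight_div_le_tableRatio_two_mul ha0 hb0 hc0 hd0)) (by positivity)
        ((by positivity : (0 : ℝ) ≤ π ^ 2 / 32).trans hstirling)

end tableRatio

theorem stmt3_general (c : ℝ) (hc0 : 0 < c) :
    ∃ K : ℝ, 0 < K ∧
      ∀ (n p m b : ℕ) (α : ℝ),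
        2 ≤ n → 0 < p → p < n → c ≤ α → α ≤ 1 - c →
        (m : ℝ) = α * n → (b : ℝ) = α * p →
        K / Real.sqrt n
          ≤ ((Nat.choose p b * Nat.choose (n - p) (m - b) : ℕ) : ℝ)
              / ((Nat.choose n m : ℕ) : ℝ) := by
  refine ⟨π ^ 2 * √8 / 32, by positivity, fun n p m b α _ hp hpn hcα hαc hm hb => ?_⟩
  have hα0 : 0 < α := hc0.trans_le hcα
  have hα1 : α < 1 := by linarith
  have hpn' : (p : ℝ) ≤ n := by exact_mod_cast hpn.le
  have hbp : b ≤ p := by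
    exact_mod_cast (show (b : ℝ) ≤ p from hb ▸ mul_le_of_le_one_left p.cast_nonneg hα1.le)
  have hbm : b ≤ m := by
    exact_mod_cast (show (b : ℝ) ≤ m from hb ▸ hm ▸ mul_le_mul_of_nonneg_left hpn' hα0.le)
  have hmn : m + p ≤ n + b := by
    have := mul_nonneg (sub_nonneg.2 hα1.le) (sub_nonneg.2 hpn')
    exact_mod_cast (show (m : ℝ) + p ≤ n + b by rw [hm, hb]; linarith)
  obtain ⟨b', rfl⟩ := Nat.exists_eq_add_of_le hbp
  obtain ⟨c', rfl⟩ := Nat.exists_eq_add_of_le hbm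
  obtain ⟨d', rfl⟩ := Nat.exists_eq_add_of_le (show b + b' + c' ≤ n by omega)
  rw [show b + b' + c' + d' - (b + b') = c' + d' by omega, show b + c' - b = c' by omega,
    cast_choose_mul_choose_div_choose]
  push_cast at hm hb
  have hc' : (c' : ℝ) = α * (c' + d') := by linarith
  obtain ⟨hb0, hb'0⟩ := ne_zero_and_ne_zero_of_cast_eq_mul hα0 hα1 hb (by omega)
  obtain ⟨hc'0, hd'0⟩ := ne_zero_and_ne_zero_of_cast_eq_mul hα0 hα1 hc' (by omega)
  exact div_sqrt_le_tableRatio_factorial hb0 hb'0 hc'0 hd'0 hb hc'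

/-- For every `c ∈ (0, 1/2]` there is `K > 0` such that for all integers
`n ≥ 2`, `0 < p < n`, and every real `α ∈ [c, 1−c]` for which `αn` and `αp` are integers,
`C(p, αp) · C(n − p, α(n−p)) / C(n, αn) ≥ K / √n`; equivalently, for `S'` uniform on the
`αn`-element subsets of an `n`-element set and `Φ` a `p`-element subset,
`Pr[|S' ∩ Φ| = αp] ≥ K / √n`. -/
theorem stmt3 (c : ℝ) (hc0 : 0 < c) (hc : c ≤ 1 / 2) :
    ∃ K : ℝ, 0 < K ∧
      ∀ (n p m b : ℕ) (α : ℝ),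
        2 ≤ n → 0 < p → p < n → c ≤ α → α ≤ 1 - c →
        (m : ℝ) = α * n → (b : ℝ) = α * p →
        K / Real.sqrt n
          ≤ ((Nat.choose p b * Nat.choose (n - p) (m - b) : ℕ) : ℝ)
              / ((Nat.choose n m : ℕ) : ℝ) :=
  stmt3_general c hc0
end

section
/- Let S = {1,…,n}, Φ ⊆ S with |Φ| = p and 0 < p < n, let w ∈ ℝⁿ, and let m, a be integers such that both events {S' : |S'| = m, |S' ∩ Φ| = a} and {S' : |S'| = m, |S' ∩ Φ| = a + 1} are nonempty. Then E[Σ_{i∈S'} w_i | |S' ∩ Φ| = a + 1] − E[Σ_{i∈S'} w_i | |S' ∩ Φ| = a] = (1/p) Σ_{i ∈ Φ} w_i − (1/(n−p)) Σ_{i ∉ Φ} w_i = w^T h(1_Φ), where the expectations are over a uniformly random m-element subset S' of S. -/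
/-- The `{0,1}`-indicator vector of a subset `Φ ⊆ {1,…,n}`. -/
noncomputable def ind {n : ℕ} (Φ : Finset (Fin n)) : Fin n → ℝ :=
  fun i => if i ∈ Φ then 1 else 0

/-- For `v ∈ {0,1}ⁿ` with `0 < ‖v‖₁ < n`, the vector
`h(v) = (1/‖v‖₁)·v − (1/(n−‖v‖₁))·(𝟙 − v)` (for `0/1` vectors, `‖v‖₁ = Σ_j v_j`). -/
noncomputable def hvec {n : ℕ} (v : Fin n → ℝ) : Fin n → ℝ :=
  fun i => (1 / ∑ j, v j) * v i - (1 / ((n : ℝ) - ∑ j, v j)) * (1 - v i)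

open Finset in
section

variable {n : ℕ}

def Fk (m k : ℕ) (Φ : Finset (Fin n)) : Finset (Finset (Fin n)) :=
  (Finset.powersetCard m (Finset.univ : Finset (Fin n))).filter
    (fun S' => (S' ∩ Φ).card = k)

lemma count_le (m k : ℕ) (Φ : Finset (Fin n)) {i j : Fin n} (h : i ∈ Φ ↔ j ∈ Φ) :
    ((Fk m k Φ).filter (fun S' => i ∈ S')).card
      ≤ ((Fk m k Φ).filter (fun S' => j ∈ S')).card := by
  set e := Equiv.swap i j with he
  have hsw : ∀ x : Fin n, e x ∈ Φ ↔ x ∈ Φ := by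
    intro x
    rw [he, Equiv.swap_apply_def]
    split_ifs with h1 h2 <;> simp_all
  have hΦ : Φ.map e.toEmbedding = Φ := by
    ext x
    rw [Finset.mem_map_equiv, he, Equiv.symm_swap, ← he]
    exact hsw x
  apply Finset.card_le_card_of_injOn (fun S' => S'.map e.toEmbedding)
  · intro S' hS'
    simp only [Finset.mem_coe, Finset.mem_filter, Fk, Finset.mem_powersetCard_univ] at hS' ⊢
    obtain ⟨⟨hc, hk⟩, hi⟩ := hS'
    refine ⟨⟨by simp [hc], ?_⟩, ?_⟩
    · rw [← hΦ, ← Finset.map_inter, Finset.card_map]; exact hk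
    · rw [Finset.mem_map_equiv, Equiv.symm_swap]
      simpa [Equiv.swap_apply_right] using hi
  · intro s _ t _ hst
    exact Finset.map_injective _ hst

lemma count_eq (m k : ℕ) (Φ : Finset (Fin n)) {i j : Fin n} (h : i ∈ Φ ↔ j ∈ Φ) :
    ((Fk m k Φ).filter (fun S' => i ∈ S')).card
      = ((Fk m k Φ).filter (fun S' => j ∈ S')).card :=
  le_antisymm (count_le m k Φ h) (count_le m k Φ h.symm)

lemma sum_count (m k : ℕ) (Φ T : Finset (Fin n)) :
    ∑ j ∈ T, ((Fk m k Φ).filter (fun S' => j ∈ S')).card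
      = ∑ S' ∈ Fk m k Φ, (S' ∩ T).card := by
  have h1 : ∀ j, ((Fk m k Φ).filter (fun S' => j ∈ S')).card
      = ∑ S' ∈ Fk m k Φ, if j ∈ S' then 1 else 0 := by
    intro j; rw [Finset.card_filter]
  simp_rw [h1]
  rw [Finset.sum_comm]
  refine Finset.sum_congr rfl fun S' _ => ?_
  rw [← Finset.card_filter, Finset.filter_mem_eq_inter, Finset.inter_comm]

lemma sum_count_mem (m k : ℕ) (Φ : Finset (Fin n)) :
    ∑ j ∈ Φ, ((Fk m k Φ).filter (fun S' => j ∈ S')).card = k * (Fk m k Φ).card := by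
  rw [sum_count]
  rw [Finset.sum_congr rfl (fun S' hS' => ?_), Finset.sum_const, smul_eq_mul, mul_comm]
  simp only [Fk, Finset.mem_filter] at hS'
  exact hS'.2

lemma sum_count_compl (m k : ℕ) (Φ : Finset (Fin n)) :
    ∑ j ∈ Φᶜ, ((Fk m k Φ).filter (fun S' => j ∈ S')).card = (m - k) * (Fk m k Φ).card := by
  rw [sum_count]
  rw [Finset.sum_congr rfl (fun S' hS' => ?_), Finset.sum_const, smul_eq_mul, mul_comm]
  simp only [Fk, Finset.mem_filter, Finset.mem_powersetCard_univ] at hS'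
  obtain ⟨hm, hk⟩ := hS'
  have h2 : S' ∩ Φᶜ = S' \ Φ := by ext x; simp [Finset.mem_sdiff]
  rw [h2]
  have := Finset.card_inter_add_card_sdiff S' Φ
  omega

lemma exp_eq (m k : ℕ) (Φ : Finset (Fin n)) (w : Fin n → ℝ)
    (hp0 : 0 < Φ.card) (hpn : Φ.card < n) (hk : (Fk m k Φ).Nonempty) :
    (∑ S' ∈ Fk m k Φ, ∑ i ∈ S', w i) / ((Fk m k Φ).card : ℝ)
      = ((k : ℝ) / Φ.card) * ∑ i ∈ Φ, w i
        + (((m : ℝ) - k) / ((n : ℝ) - Φ.card)) * ∑ i ∈ Φᶜ, w i := by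
  obtain ⟨S₀, hS₀⟩ := hk
  have hkm : k ≤ m := by
    simp only [Fk, Finset.mem_filter, Finset.mem_powersetCard_univ] at hS₀
    calc k = (S₀ ∩ Φ).card := hS₀.2.symm
    _ ≤ S₀.card := Finset.card_le_card (Finset.inter_subset_left)
    _ = m := hS₀.1
  have hN : ((Fk m k Φ).card : ℝ) ≠ 0 := by
    have : (Fk m k Φ).Nonempty := ⟨S₀, hS₀⟩
    exact_mod_cast Finset.card_ne_zero_of_mem hS₀
  have hpR : (Φ.card : ℝ) ≠ 0 := by positivity
  have hcompl : (Φᶜ.card : ℝ) = (n : ℝ) - Φ.card := by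
    have : Φᶜ.card = n - Φ.card := by
      rw [Finset.card_compl]; simp
    rw [this]
    push_cast [Nat.cast_sub hpn.le]
    simp
  have hnpR : ((n : ℝ) - Φ.card) ≠ 0 := by
    have : (Φ.card : ℝ) < n := by exact_mod_cast hpn
    linarith
  -- numerator as sum over coordinates
  have hnum : ∑ S' ∈ Fk m k Φ, ∑ i ∈ S', w i
      = ∑ i, w i * (((Fk m k Φ).filter (fun S' => i ∈ S')).card : ℝ) := by
    have h1 : ∀ S' ∈ Fk m k Φ, ∑ i ∈ S', w i = ∑ i, if i ∈ S' then w i else 0 := by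
      intro S' _
      rw [Finset.sum_ite_mem, Finset.univ_inter]
    rw [Finset.sum_congr rfl h1, Finset.sum_comm]
    refine Finset.sum_congr rfl fun i _ => ?_
    rw [← Finset.sum_filter, Finset.sum_const, nsmul_eq_mul, mul_comm]
  -- constancy
  obtain ⟨i₀, hi₀⟩ := Finset.card_pos.mp hp0
  obtain ⟨j₀, hj₀⟩ : Φᶜ.Nonempty := by
    rw [← Finset.card_pos, Finset.card_compl]
    simp
    omega
  have hci : ∀ i ∈ Φ, (((Fk m k Φ).filter (fun S' => i ∈ S')).card : ℝ)
      = (k : ℝ) * (Fk m k Φ).card / Φ.card := by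
    intro i hi
    have hsum : ∑ j ∈ Φ, ((Fk m k Φ).filter (fun S' => j ∈ S')).card = k * (Fk m k Φ).card :=
      sum_count_mem m k Φ
    have hconst : ∀ j ∈ Φ, ((Fk m k Φ).filter (fun S' => j ∈ S')).card
        = ((Fk m k Φ).filter (fun S' => i ∈ S')).card := by
      intro j hj
      exact count_eq m k Φ (by simp [hj, hi])
    rw [Finset.sum_congr rfl hconst, Finset.sum_const, smul_eq_mul] at hsum
    have hR : (Φ.card : ℝ) * (((Fk m k Φ).filter (fun S' => i ∈ S')).card : ℝ)
        = (k : ℝ) * ((Fk m k Φ).card : ℝ) := by exact_mod_cast hsum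
    rw [eq_div_iff hpR]
    linarith
  have hcj : ∀ i ∈ Φᶜ, (((Fk m k Φ).filter (fun S' => i ∈ S')).card : ℝ)
      = ((m : ℝ) - k) * (Fk m k Φ).card / ((n : ℝ) - Φ.card) := by
    intro i hi
    have hsum := sum_count_compl m k Φ
    have hconst : ∀ j ∈ Φᶜ, ((Fk m k Φ).filter (fun S' => j ∈ S')).card
        = ((Fk m k Φ).filter (fun S' => i ∈ S')).card := by
      intro j hj
      refine count_eq m k Φ ?_
      simp only [Finset.mem_compl] at hi hj
      simp [hi, hj]
    rw [Finset.sum_congr rfl hconst, Finset.sum_const, smul_eq_mul] at hsum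
    have hR : (Φᶜ.card : ℝ) * (((Fk m k Φ).filter (fun S' => i ∈ S')).card : ℝ)
        = (((m - k : ℕ)) : ℝ) * ((Fk m k Φ).card : ℝ) := by exact_mod_cast hsum
    rw [hcompl, Nat.cast_sub hkm] at hR
    rw [eq_div_iff hnpR]
    linarith
  have e1 : ∑ i ∈ Φ, w i * (((Fk m k Φ).filter (fun S' => i ∈ S')).card : ℝ)
      = (∑ i ∈ Φ, w i) * ((k : ℝ) * (Fk m k Φ).card / Φ.card) := by
    rw [Finset.sum_congr rfl (fun i hi => by rw [hci i hi]), ← Finset.sum_mul]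
  have e2 : ∑ i ∈ Φᶜ, w i * (((Fk m k Φ).filter (fun S' => i ∈ S')).card : ℝ)
      = (∑ i ∈ Φᶜ, w i) * (((m : ℝ) - k) * (Fk m k Φ).card / ((n : ℝ) - Φ.card)) := by
    rw [Finset.sum_congr rfl (fun i hi => by rw [hcj i hi]), ← Finset.sum_mul]
  rw [hnum, ← Finset.sum_add_sum_compl Φ, e1, e2, div_eq_iff hN]
  field_simp

end

/-- Let `S = {1,…,n}`, `Φ ⊆ S` with `|Φ| = p`, `0 < p < n`, `w ∈ ℝⁿ`, and
let `m`, `a` be integers such that both events `{S' : |S'| = m, |S' ∩ Φ| = a}` and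
`{S' : |S'| = m, |S' ∩ Φ| = a + 1}` are nonempty.  Then, for `S'` uniform over the
`m`-element subsets of `S`,
`E[Σ_{i∈S'} w_i | |S' ∩ Φ| = a+1] − E[Σ_{i∈S'} w_i | |S' ∩ Φ| = a]
  = (1/p) Σ_{i∈Φ} w_i − (1/(n−p)) Σ_{i∉Φ} w_i = w^T h(1_Φ)`. -/
theorem stmt6 (n p m a : ℕ) (Φ : Finset (Fin n)) (hp : Φ.card = p)
    (hp0 : 0 < p) (hpn : p < n) (w : Fin n → ℝ)
    (hne : ((Finset.powersetCard m (Finset.univ : Finset (Fin n))).filter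
        (fun S' => (S' ∩ Φ).card = a)).Nonempty)
    (hne' : ((Finset.powersetCard m (Finset.univ : Finset (Fin n))).filter
        (fun S' => (S' ∩ Φ).card = a + 1)).Nonempty) :
    ((∑ S' ∈ (Finset.powersetCard m (Finset.univ : Finset (Fin n))).filter
          (fun S' => (S' ∩ Φ).card = a + 1), ∑ i ∈ S', w i)
        / (((Finset.powersetCard m (Finset.univ : Finset (Fin n))).filter
          (fun S' => (S' ∩ Φ).card = a + 1)).card : ℝ))
      - ((∑ S' ∈ (Finset.powersetCard m (Finset.univ : Finset (Fin n))).filter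
          (fun S' => (S' ∩ Φ).card = a), ∑ i ∈ S', w i)
        / (((Finset.powersetCard m (Finset.univ : Finset (Fin n))).filter
          (fun S' => (S' ∩ Φ).card = a)).card : ℝ))
    = (1 / (p : ℝ)) * ∑ i ∈ Φ, w i - (1 / ((n : ℝ) - (p : ℝ))) * ∑ i ∈ Φᶜ, w i
    ∧ (1 / (p : ℝ)) * ∑ i ∈ Φ, w i - (1 / ((n : ℝ) - (p : ℝ))) * ∑ i ∈ Φᶜ, w i
      = ∑ i, w i * hvec (ind Φ) i := by
  have hpc : Φ.card = p := hp
  have hpR : (p : ℝ) ≠ 0 := by positivity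
  have hnpR : ((n : ℝ) - p) ≠ 0 := by
    have : (p : ℝ) < n := by exact_mod_cast hpn
    linarith
  have hB : ((∑ S' ∈ (Finset.powersetCard m (Finset.univ : Finset (Fin n))).filter
          (fun S' => (S' ∩ Φ).card = a), ∑ i ∈ S', w i)
        / (((Finset.powersetCard m (Finset.univ : Finset (Fin n))).filter
          (fun S' => (S' ∩ Φ).card = a)).card : ℝ))
      = ((a : ℝ) / Φ.card) * ∑ i ∈ Φ, w i
        + (((m : ℝ) - a) / ((n : ℝ) - Φ.card)) * ∑ i ∈ Φᶜ, w i :=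
    exp_eq m a Φ w (hpc ▸ hp0) (hpc ▸ hpn) hne
  have hA : ((∑ S' ∈ (Finset.powersetCard m (Finset.univ : Finset (Fin n))).filter
          (fun S' => (S' ∩ Φ).card = a + 1), ∑ i ∈ S', w i)
        / (((Finset.powersetCard m (Finset.univ : Finset (Fin n))).filter
          (fun S' => (S' ∩ Φ).card = a + 1)).card : ℝ))
      = (((a : ℝ) + 1) / Φ.card) * ∑ i ∈ Φ, w i
        + (((m : ℝ) - ((a : ℝ) + 1)) / ((n : ℝ) - Φ.card)) * ∑ i ∈ Φᶜ, w i := by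
    have := exp_eq m (a + 1) Φ w (hpc ▸ hp0) (hpc ▸ hpn) hne'
    push_cast at this
    exact this
  constructor
  · rw [hA, hB, hpc]
    field_simp
    ring
  · have hsum : ∑ j, ind Φ j = (p : ℝ) := by
      simp only [ind, Finset.sum_ite_mem, Finset.univ_inter, Finset.sum_const,
        nsmul_eq_mul, mul_one, hpc]
    have key : ∀ i, w i * hvec (ind Φ) i
        = (if i ∈ Φ then w i * (1 / (p : ℝ)) else w i * (-(1 / ((n : ℝ) - p)))) := by
      intro i
      by_cases hi : i ∈ Φ <;> simp [hvec, ind, hi, hsum] <;> exact Or.inl hpc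
    rw [Finset.sum_congr rfl (fun i _ => key i), Finset.sum_ite,
      Finset.filter_mem_eq_inter, Finset.univ_inter]
    have : Finset.filter (fun i => i ∉ Φ) Finset.univ = Φᶜ := by
      ext x; simp
    rw [this, ← Finset.sum_mul, ← Finset.sum_mul]
    ring
end

section
/- For every c ∈ (0, 1/2] there exists a constant C > 0 such that the following holds. Let n ≥ 2 and 0 < p < n be integers, let α be a real with c ≤ α ≤ 1 − c such that αn and αp are integers, and let Φ ⊆ {1,…,n} with |Φ| = p. Suppose F assigns a real number to every αn-element subset S' of {1,…,n}, and w ∈ ℝⁿ is such that the average over all αn-element subsets S' of (F(S') − Σ_{i∈S'} w_i)² is at most ε for some ε ≥ 0. Then |avg{F(S') : |S'| = αn, |S' ∩ Φ| = αp} − avg{Σ_{i∈S'} w_i : |S'| = αn, |S' ∩ Φ| = αp}| ≤ C · ε^{1/2} · n^{1/4}. -/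
/-- The average of `F` over the `m`-element subsets of `{1,…,n}` satisfying `P`
(the conditional expectation of `F` under the uniform distribution on `m`-element
subsets, conditioned on `P`). -/
noncomputable def condAvg {n : ℕ} (m : ℕ) (P : Finset (Fin n) → Prop) [DecidablePred P]
    (F : Finset (Fin n) → ℝ) : ℝ :=
  (∑ S' ∈ (Finset.powersetCard m (Finset.univ : Finset (Fin n))).filter P, F S')
    / (((Finset.powersetCard m (Finset.univ : Finset (Fin n))).filter P).card : ℝ)

open Finset

/-! The conditioning event `|S' ∩ Φ| = αp` is the mode of a hypergeometric distribution and
has probability at least `1 / (12 √n)`. Writing `N k = C(p, k) C(n - p, m - k)` and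
`s² = (p - b)(m - b)`, the ratio `N (b + j + 1) / N (b + j)` is at most `s / (s + 2j)`, so each
tail of `N` beyond the mode `b` sums to `O(√s)` times `N b`. Cauchy–Schwarz on the conditioned
family then bounds the squared conditional error by `12 √n ε`. -/

theorem condAvg_sub {n m : ℕ} (P : Finset (Fin n) → Prop) [DecidablePred P]
    (F G : Finset (Fin n) → ℝ) :
    condAvg m P F - condAvg m P G = condAvg m P (fun S => F S - G S) := by
  simp only [condAvg, ← sub_div, sum_sub_distrib]

theorem sq_sum_div_card_le_of_subset {ι : Type*} {T U : Finset ι} (hTU : T ⊆ U)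
    (f : ι → ℝ) :
    ((∑ i ∈ T, f i) / #T) ^ 2 ≤ (#U / #T) * ((∑ i ∈ U, f i ^ 2) / #U) := by
  rcases T.eq_empty_or_nonempty with rfl | hT
  · simp
  have hT0 : (0 : ℝ) < #T := by exact_mod_cast hT.card_pos
  have hU0 : (0 : ℝ) < #U := hT0.trans_le (by exact_mod_cast card_le_card hTU)
  calc ((∑ i ∈ T, f i) / #T) ^ 2 ≤ (#T * ∑ i ∈ T, f i ^ 2) / #T ^ 2 := by
        rw [div_pow]; gcongr; exact sq_sum_le_card_mul_sum_sq
    _ = (∑ i ∈ T, f i ^ 2) / #T := by field_simp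
    _ ≤ (∑ i ∈ U, f i ^ 2) / #T := by gcongr
    _ = _ := by field_simp

theorem card_filter_card_inter_eq {α : Type*} [Fintype α] [DecidableEq α] (Φ : Finset α)
    {m k : ℕ} (hk : k ≤ m) :
    #{S ∈ powersetCard m (univ : Finset α) | #(S ∩ Φ) = k}
      = (#Φ).choose k * (#Φᶜ).choose (m - k) := by
  rw [← card_powersetCard, ← card_powersetCard, ← card_product]
  have hunion {X Y : Finset α} (hX : X ⊆ Φ) (hY : Y ⊆ Φᶜ) :
      (X ∪ Y) ∩ Φ = X ∧ (X ∪ Y) \ Φ = Y := by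
    constructor <;> ext x <;> simp only [mem_inter, mem_union, mem_sdiff] <;>
      grind [mem_compl]
  refine card_bij' (fun S _ => (S ∩ Φ, S \ Φ)) (fun X _ => X.1 ∪ X.2) ?_ ?_ ?_ ?_
  · intro S hS
    rw [mem_filter, mem_powersetCard_univ] at hS
    simp only [mem_product, mem_powersetCard]
    refine ⟨⟨inter_subset_right, hS.2⟩, fun x hx => mem_compl.mpr (mem_sdiff.mp hx).2, ?_⟩
    have := card_inter_add_card_sdiff S Φ
    omega
  · rintro ⟨X, Y⟩ h
    simp only [mem_product, mem_powersetCard] at h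
    obtain ⟨⟨hX, rfl⟩, hY, hYc⟩ := h
    have hd : Disjoint X Y :=
      disjoint_of_subset_left hX (disjoint_of_subset_right hY disjoint_compl_right)
    rw [mem_filter, mem_powersetCard_univ, card_union_of_disjoint hd, (hunion hX hY).1]
    omega
  · intro S _
    exact sdiff_union_inter S Φ |>.symm.trans (union_comm _ _) |>.symm
  · rintro ⟨X, Y⟩ h
    simp only [mem_product, mem_powersetCard] at h
    rw [(hunion h.1.1 h.2.1).1, (hunion h.1.1 h.2.1).2]

-- `∏ i < j, (1 + 2 i / s) ≥ 1 + ∑ i < j, 2 i / s = 1 + j (j - 1) / s`.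
theorem mul_add_sq_sub_le_of_step {g : ℕ → ℝ} {s : ℝ} {M : ℕ} (hs : 0 < s)
    (hg : ∀ j < M, 0 ≤ g j) (hstep : ∀ j, j + 1 < M → g (j + 1) * (s + 2 * j) ≤ g j * s) :
    ∀ j < M, g j * (s + j ^ 2 - j) ≤ s * g 0 := by
  intro j hj
  induction j with
  | zero => simp [mul_comm]
  | succ j ih =>
    have hj' : (0 : ℝ) ≤ j ^ 2 * (j - 1) := by
      rcases Nat.eq_zero_or_pos j with rfl | h
      · simp
      · have : (1 : ℝ) ≤ j := by exact_mod_cast h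
        positivity
    have key : g (j + 1) * (s + (j + 1 : ℕ) ^ 2 - (j + 1 : ℕ)) * (s + 2 * j)
        ≤ s * g 0 * (s + 2 * j) := by
      push_cast
      nlinarith [hstep j hj, ih (by omega), hg j (by omega), hg (j + 1) hj]
    exact le_of_mul_le_mul_right key (by positivity)

theorem sum_range_le_of_step {g : ℕ → ℝ} {s : ℝ} {M : ℕ} (hs : 1 ≤ s)
    (hg : ∀ j, 0 ≤ g j) (hstep : ∀ j, j + 1 < M → g (j + 1) * (s + 2 * j) ≤ g j * s) :
    ∑ j ∈ range M, g j ≤ 6 * √s * g 0 := by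
  set a := √s
  have ha1 : 1 ≤ a := Real.one_le_sqrt.mpr hs
  have has : a ^ 2 = s := Real.sq_sqrt (by linarith)
  have hterm : ∀ j < M, g j ≤ 6 * s * g 0 * (1 / (j + a) - 1 / ((j + 1 : ℕ) + a)) := by
    intro j hj
    have hjj : (0 : ℝ) ≤ (4 * j - 3) * (j - 1) := by
      rcases Nat.eq_zero_or_pos j with rfl | h
      · norm_num
      · have : (1 : ℝ) ≤ j := by exact_mod_cast h
        nlinarith
    have hpoly : (j + a) * (j + a + 1) ≤ 6 * (s + j ^ 2 - j) := by
      nlinarith [sq_nonneg ((j : ℝ) - a)]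
    have htele : 1 / ((j : ℝ) + a) - 1 / ((j + 1 : ℕ) + a) = 1 / ((j + a) * (j + a + 1)) := by
      push_cast
      field_simp
      ring
    rw [htele, mul_one_div, le_div_iff₀ (by positivity)]
    calc g j * ((j + a) * (j + a + 1)) ≤ g j * (6 * (s + j ^ 2 - j)) :=
          mul_le_mul_of_nonneg_left hpoly (hg j)
      _ ≤ 6 * s * g 0 := by
          linarith [mul_add_sq_sub_le_of_step (by linarith) (fun j _ => hg j) hstep j hj]
  calc ∑ j ∈ range M, g j
      ≤ ∑ j ∈ range M, 6 * s * g 0 * (1 / (j + a) - 1 / ((j + 1 : ℕ) + a)) :=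
        sum_le_sum fun j hj => hterm j (mem_range.mp hj)
    _ = 6 * s * g 0 * (1 / a - 1 / (M + a)) := by
        rw [← mul_sum, sum_range_sub' (fun j : ℕ => 1 / ((j : ℝ) + a))]
        simp
    _ ≤ 6 * s * g 0 * (1 / a) := by
        have := hg 0
        gcongr
        exact sub_le_self _ (by positivity)
    _ = 6 * a * g 0 := by
        rw [← has]; field_simp

-- `b, A, d, E` are the cells `S ∩ Φ, Φ \ S, S \ Φ, Φᶜ \ S` of a `(b + d)`-set `S` at the mode;
-- `b * E = A * d` says that `b` is the mean of the hypergeometric distribution.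
theorem choose_mul_choose_succ_mul_eq (b A d E : ℕ) {j : ℕ} (hj : j < d) :
    (b + A).choose (b + j + 1) * (d + E).choose (d - (j + 1)) * ((b + j + 1) * (E + j + 1))
      = (b + A).choose (b + j) * (d + E).choose (d - j) * ((A - j) * (d - j)) := by
  have hP := Nat.choose_succ_right_eq (b + A) (b + j)
  have hQ := Nat.choose_succ_right_eq (d + E) (d - (j + 1))
  rw [show b + A - (b + j) = A - j by omega] at hP
  rw [show d - (j + 1) + 1 = d - j by omega,
    show d + E - (d - (j + 1)) = E + j + 1 by omega] at hQ
  calc _ = (b + A).choose (b + j + 1) * (b + j + 1)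
          * ((d + E).choose (d - (j + 1)) * (E + j + 1)) := by ring
    _ = _ := by rw [hP, ← hQ]; ring

theorem choose_mul_choose_succ_mul_le {b A d E j : ℕ} {s : ℝ} (hs : 0 < s)
    (hsA : s ^ 2 = A * d) (hsb : s ^ 2 = b * E) (hj : j < d) :
    ((b + A).choose (b + j + 1) * (d + E).choose (d - (j + 1)) : ℝ) * (s + 2 * j)
      ≤ ((b + A).choose (b + j) * (d + E).choose (d - j)) * s := by
  have hrec := congrArg (Nat.cast (R := ℝ)) (choose_mul_choose_succ_mul_eq b A d E hj)
  push_cast at hrec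
  set X : ℝ := (b + A).choose (b + j + 1) * (d + E).choose (d - (j + 1))
  set Y : ℝ := (b + A).choose (b + j) * (d + E).choose (d - j)
  have hnum : ((A - j : ℕ) : ℝ) * (d - j : ℕ) ≤ s ^ 2 := by
    rw [hsA]; exact_mod_cast Nat.mul_le_mul (Nat.sub_le A j) (Nat.sub_le d j)
  -- AM–GM on `b * E = s ^ 2`
  have hden : s * (s + 2 * j) ≤ (b + j + 1) * (E + j + 1) := by
    have hbE : 2 * s ≤ b + E := by nlinarith [sq_nonneg ((b : ℝ) - E)]
    nlinarith [(Nat.cast_nonneg j : (0 : ℝ) ≤ j)]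
  refine le_of_mul_le_mul_right ?_ hs
  calc X * (s + 2 * j) * s = X * (s * (s + 2 * j)) := by ring
    _ ≤ X * ((b + j + 1) * (E + j + 1)) := by gcongr
    _ ≤ Y * s ^ 2 := by rw [hrec]; gcongr
    _ = Y * s * s := by ring

theorem sum_range_choose_mul_choose_le {b A d E : ℕ} (hbal : b * E = A * d) (hpos : 0 < A * d) :
    ∑ j ∈ range (d + 1), ((b + A).choose (b + j) * (d + E).choose (d - j) : ℝ)
      ≤ 6 * √(A + d : ℝ) * ((b + A).choose b * (d + E).choose d) := by
  set s := √(A * d : ℝ)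
  have hAd : (1 : ℝ) ≤ A * d := by exact_mod_cast hpos
  have hsA : s ^ 2 = A * d := Real.sq_sqrt (by positivity)
  have hs1 : 1 ≤ s := Real.one_le_sqrt.mpr hAd
  have hsb : s ^ 2 = b * E := by rw [hsA]; exact_mod_cast hbal.symm
  have hsAd : s ≤ A + d := by nlinarith [sq_nonneg ((A : ℝ) - d)]
  calc _ ≤ 6 * √s * ((b + A).choose (b + 0) * (d + E).choose (d - 0)) :=
        sum_range_le_of_step hs1 (fun j => by positivity) fun j hj =>
          choose_mul_choose_succ_mul_le (by linarith) hsA hsb (by omega)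
    _ ≤ _ := by simp only [add_zero, Nat.sub_zero]; gcongr

theorem add_choose_le_sum_tails (P Q b d : ℕ) :
    (P + Q).choose (b + d) ≤ ∑ j ∈ range (d + 1), P.choose (b + j) * Q.choose (d - j)
      + ∑ j ∈ range (b + 1), Q.choose (d + j) * P.choose (b - j) := by
  rw [Nat.add_choose_eq, Finset.Nat.sum_antidiagonal_eq_sum_range_succ
    (fun i j => P.choose i * Q.choose j), Nat.succ_eq_add_one, add_assoc, sum_range_add,
    add_comm]
  gcongr with j hj
  · rw [Nat.add_sub_add_left]
  · calc ∑ k ∈ range b, P.choose k * Q.choose (b + d - k)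
        ≤ ∑ k ∈ range (b + 1), P.choose k * Q.choose (b + d - k) := by
          gcongr; simp
      _ = ∑ j ∈ range (b + 1), P.choose (b - j) * Q.choose (b + d - (b - j)) :=
          (sum_range_reflect _ _).symm
      _ = _ := sum_congr rfl fun j hj => by
          rw [mul_comm, show b + d - (b - j) = d + j by grind]

theorem add_choose_le_sqrt_mul_choose_mul_choose {b A d E : ℕ} (hbal : b * E = A * d)
    (hpos : 0 < A * d) :
    ((b + A + (d + E)).choose (b + d) : ℝ)
      ≤ 12 * √((b + A + (d + E) : ℕ) : ℝ) * ((b + A).choose b * (d + E).choose d) := by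
  have hright := sum_range_choose_mul_choose_le hbal hpos
  -- the left tail is the right tail with the roles of `Φ` and `Φᶜ` exchanged
  have hleft := sum_range_choose_mul_choose_le (b := d) (A := E) (d := b) (E := A)
    (by rw [mul_comm, ← hbal, mul_comm]) (by rw [mul_comm, hbal]; exact hpos)
  have hsplit : ((b + A + (d + E)).choose (b + d) : ℝ)
      ≤ ∑ j ∈ range (d + 1), ((b + A).choose (b + j) * (d + E).choose (d - j) : ℝ)
        + ∑ j ∈ range (b + 1), ((d + E).choose (d + j) * (b + A).choose (b - j) : ℝ) := by
    exact_mod_cast add_choose_le_sum_tails (b + A) (d + E) b d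
  have h1 : √(A + d : ℝ) ≤ √(b + A + (d + E) : ℝ) := Real.sqrt_le_sqrt (by linarith)
  have h2 : √(E + b : ℝ) ≤ √(b + A + (d + E) : ℝ) := Real.sqrt_le_sqrt (by linarith)
  have h0 : (0 : ℝ) ≤ (b + A).choose b * (d + E).choose d := by positivity
  push_cast
  nlinarith

theorem card_powersetCard_div_card_filter_le {α : Type*} [Fintype α] [DecidableEq α]
    (Φ : Finset α) {m b : ℕ} (hbΦ : b < #Φ) (hbm : b < m)
    (hbal : b * Fintype.card α = #Φ * m) :
    (#(powersetCard m (univ : Finset α)) : ℝ) / #{S ∈ powersetCard m univ | #(S ∩ Φ) = b}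
      ≤ 12 * √(Fintype.card α : ℝ) := by
  set n := Fintype.card α
  set p := #Φ
  have hpn : p ≤ n := card_le_univ Φ
  have hmp : m + p ≤ n + b := by nlinarith
  have hcorner : b * (n - p - (m - b)) = (p - b) * (m - b) := by
    zify [hbΦ.le, hbm.le, hpn, show m - b ≤ n - p by omega]
    linear_combination (by exact_mod_cast hbal : (b : ℤ) * n = p * m)
  have hmode := add_choose_le_sqrt_mul_choose_mul_choose hcorner
    (Nat.mul_pos (by omega) (by omega))
  rw [show b + (p - b) + (m - b + (n - p - (m - b))) = n by omega, show b + (m - b) = m by omega,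
    show b + (p - b) = p by omega, show m - b + (n - p - (m - b)) = n - p by omega] at hmode
  have hmode_pos : 0 < p.choose b * (n - p).choose (m - b) :=
    Nat.mul_pos (Nat.choose_pos hbΦ.le) (Nat.choose_pos (by omega))
  rw [card_filter_card_inter_eq Φ hbm.le, card_compl, card_powersetCard, card_univ,
    div_le_iff₀ (by exact_mod_cast hmode_pos)]
  push_cast
  exact hmode

theorem stmt7_general (c : ℝ) (hc0 : 0 < c) :
    ∃ C : ℝ, 0 < C ∧
      ∀ (n p m b : ℕ) (α : ℝ) (Φ : Finset (Fin n))
        (F : Finset (Fin n) → ℝ) (w : Fin n → ℝ) (ε : ℝ),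
        2 ≤ n → 0 < p → p < n → c ≤ α → α ≤ 1 - c →
        (m : ℝ) = α * n → (b : ℝ) = α * p → Φ.card = p → 0 ≤ ε →
        (∑ S' ∈ Finset.powersetCard m (Finset.univ : Finset (Fin n)),
            (F S' - ∑ i ∈ S', w i) ^ 2)
          / ((Finset.powersetCard m (Finset.univ : Finset (Fin n))).card : ℝ) ≤ ε →
        |condAvg m (fun S' => (S' ∩ Φ).card = b) F
            - condAvg m (fun S' => (S' ∩ Φ).card = b) (fun S' => ∑ i ∈ S', w i)|
          ≤ C * Real.sqrt ε * (n : ℝ) ^ ((1 : ℝ) / 4) := by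
  refine ⟨4, by norm_num, ?_⟩
  intro n p m b α Φ F w ε _ hp hpn hcα hαc hm hb hΦ hε hmean
  have hα0 : 0 < α := hc0.trans_le hcα
  have hpR : (0 : ℝ) < p := by exact_mod_cast hp
  have hpnR : (p : ℝ) < n := by exact_mod_cast hpn
  have hbp : b < p := by exact_mod_cast (show (b : ℝ) < p by rw [hb]; nlinarith)
  have hbm : b < m := by exact_mod_cast (show (b : ℝ) < m by rw [hb, hm]; nlinarith)
  have hbal : b * n = p * m := by
    exact_mod_cast (show (b : ℝ) * n = p * m by rw [hb, hm]; ring)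
  subst hΦ
  have hratio := card_powersetCard_div_card_filter_le Φ hbp hbm (by rwa [Fintype.card_fin])
  rw [Fintype.card_fin] at hratio
  have hquarter : ((n : ℝ) ^ ((1 : ℝ) / 4)) ^ 2 = √n := by
    rw [← Real.rpow_natCast, ← Real.rpow_mul (Nat.cast_nonneg n), Real.sqrt_eq_rpow]
    norm_num
  rw [condAvg_sub, condAvg]
  refine abs_le_of_sq_le_sq ?_ (by positivity)
  calc _ ≤ _ := sq_sum_div_card_le_of_subset (filter_subset _ _) (fun S => F S - ∑ i ∈ S, w i)
    _ ≤ 12 * √n * ε := by gcongr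
    _ ≤ (4 * √ε * (n : ℝ) ^ ((1 : ℝ) / 4)) ^ 2 := by
        rw [mul_pow, mul_pow, Real.sq_sqrt hε, hquarter]; nlinarith [Real.sqrt_nonneg n]

/-- For every `c ∈ (0, 1/2]` there is a constant `C > 0` such that: for
integers `n ≥ 2`, `0 < p < n`, a real `α ∈ [c, 1−c]` with `αn` and `αp` integers, and
`Φ ⊆ {1,…,n}` with `|Φ| = p`, if `F` assigns a real to every `αn`-element subset `S'` and
`w ∈ ℝⁿ` satisfies that the average over all `αn`-element subsets of
`(F(S') − Σ_{i∈S'} w_i)²` is at most `ε ≥ 0`, then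
`|avg{F(S') : |S'∩Φ| = αp} − avg{Σ_{i∈S'} w_i : |S'∩Φ| = αp}| ≤ C · ε^{1/2} · n^{1/4}`. -/
theorem stmt7 (c : ℝ) (hc0 : 0 < c) (hc : c ≤ 1 / 2) :
    ∃ C : ℝ, 0 < C ∧
      ∀ (n p m b : ℕ) (α : ℝ) (Φ : Finset (Fin n))
        (F : Finset (Fin n) → ℝ) (w : Fin n → ℝ) (ε : ℝ),
        2 ≤ n → 0 < p → p < n → c ≤ α → α ≤ 1 - c →
        (m : ℝ) = α * n → (b : ℝ) = α * p → Φ.card = p → 0 ≤ ε →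
        (∑ S' ∈ Finset.powersetCard m (Finset.univ : Finset (Fin n)),
            (F S' - ∑ i ∈ S', w i) ^ 2)
          / ((Finset.powersetCard m (Finset.univ : Finset (Fin n))).card : ℝ) ≤ ε →
        |condAvg m (fun S' => (S' ∩ Φ).card = b) F
            - condAvg m (fun S' => (S' ∩ Φ).card = b) (fun S' => ∑ i ∈ S', w i)|
          ≤ C * Real.sqrt ε * (n : ℝ) ^ ((1 : ℝ) / 4) :=
  stmt7_general c hc0
end

section
/- Let n, p be integers with 0 < p < n, let W be an arbitrary real n×n matrix, and let v ∈ {0,1}ⁿ with Σ_i v_i = p. Then h(v)^T W v = (n/(p(n−p))) · v^T ( W − (p/n)·D ) v, where D is the diagonal n×n matrix whose j-th diagonal entry is the j-th column sum Σ_i W_{ij} of W. Consequently, a vector v ∈ {0,1}ⁿ with Σ_i v_i = p maximizes v ↦ h(v)^T W v over {v ∈ {0,1}ⁿ : Σ_i v_i = p} if and only if it maximizes v ↦ v^T ( W − (p/n)·D ) v over the same set. -/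
/-- The quadratic objective `h(v)^T W v`. -/
noncomputable def obj₁ {n : ℕ} (W : Fin n → Fin n → ℝ) (v : Fin n → ℝ) : ℝ :=
  ∑ i, ∑ j, hvec v i * W i j * v j

/-- The quadratic objective `v^T (W − (p/n)·D) v`, where `D` is the diagonal matrix of
column sums of `W`. -/
noncomputable def obj₂ {n : ℕ} (p : ℕ) (W : Fin n → Fin n → ℝ) (v : Fin n → ℝ) : ℝ :=
  ∑ i, ∑ j, v i * (W i j - if i = j then ((p : ℝ) / (n : ℝ)) * ∑ k, W k j else 0) * v j

/-! For Boolean `v` with `‖v‖₁ = p`, write `S = vᵀWv` and `T = 𝟙ᵀWv`. Then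
`h(v)ᵀWv = S/p − (T − S)/(n − p)`, while `v_j² = v_j` gives `vᵀDv = T`, so
`vᵀ(W − (p/n)D)v = S − (p/n)T`. The two objectives thus differ by the positive factor
`n/(p(n−p))`, which preserves maximizers. -/

open Finset

lemma obj₁_eq_div_sub_div {n : ℕ} (W : Fin n → Fin n → ℝ) (v : Fin n → ℝ) :
    obj₁ W v = (∑ i, ∑ j, v i * W i j * v j) / ∑ i, v i
      - (∑ i, ∑ j, W i j * v j - ∑ i, ∑ j, v i * W i j * v j) / (n - ∑ i, v i) := by
  simp only [obj₁, hvec, sub_div, sum_div, ← sum_sub_distrib]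
  exact sum_congr rfl fun i _ => sum_congr rfl fun j _ => by ring

lemma obj₂_eq_of_mul_self {n : ℕ} (p : ℕ) (W : Fin n → Fin n → ℝ) (v : Fin n → ℝ)
    (hv : ∀ i, v i * v i = v i) :
    obj₂ p W v = ∑ i, ∑ j, v i * W i j * v j - p / n * ∑ i, ∑ j, W i j * v j := by
  have hdiag : ∑ i, ∑ j, v i * (if i = j then (p / n : ℝ) * ∑ k, W k j else 0) * v j
      = p / n * ∑ i, ∑ j, W i j * v j := by
    simp only [mul_ite, ite_mul, mul_zero, zero_mul, sum_ite_eq, mem_univ, if_true]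
    rw [sum_comm, mul_sum]
    refine sum_congr rfl fun j _ => ?_
    rw [← sum_mul, mul_comm (v j), mul_assoc, hv]
    ring
  simp only [obj₂, mul_sub, sub_mul, sum_sub_distrib, hdiag]

lemma obj₁_eq_mul_obj₂ {n p : ℕ} (hp0 : 0 < p) (hpn : p < n) (W : Fin n → Fin n → ℝ)
    (v : Fin n → ℝ) (hv01 : ∀ i, v i = 0 ∨ v i = 1) (hvp : ∑ i, v i = (p : ℝ)) :
    obj₁ W v = (n / (p * (n - p)) : ℝ) * obj₂ p W v := by
  have hv : ∀ i, v i * v i = v i := fun i => by rcases hv01 i with h | h <;> simp [h]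
  have hp : (0 : ℝ) < p := by exact_mod_cast hp0
  have hpn' : (p : ℝ) < n := by exact_mod_cast hpn
  have hn : (0 : ℝ) < n := hp.trans hpn'
  have hnp : (0 : ℝ) < n - p := sub_pos.mpr hpn'
  rw [obj₁_eq_div_sub_div, obj₂_eq_of_mul_self p W v hv, hvp]
  field_simp
  ring

/-- Let `0 < p < n`, let `W` be an arbitrary real `n×n` matrix, and let
`v ∈ {0,1}ⁿ` with `Σ_i v_i = p`.  Then
`h(v)^T W v = (n/(p(n−p))) · v^T (W − (p/n)·D) v`, where `D` is the diagonal matrix whose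
`j`-th diagonal entry is the `j`-th column sum of `W`.  Consequently, `v` maximizes
`v ↦ h(v)^T W v` over `{v ∈ {0,1}ⁿ : Σ_i v_i = p}` iff it maximizes
`v ↦ v^T (W − (p/n)·D) v` over the same set. -/
theorem stmt11 (n p : ℕ) (hp0 : 0 < p) (hpn : p < n) (W : Fin n → Fin n → ℝ)
    (v : Fin n → ℝ) (hv01 : ∀ i, v i = 0 ∨ v i = 1) (hvp : ∑ i, v i = (p : ℝ)) :
    obj₁ W v = ((n : ℝ) / ((p : ℝ) * ((n : ℝ) - (p : ℝ)))) * obj₂ p W v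
    ∧ ((∀ u : Fin n → ℝ, (∀ i, u i = 0 ∨ u i = 1) → ∑ i, u i = (p : ℝ) →
          obj₁ W u ≤ obj₁ W v)
        ↔ (∀ u : Fin n → ℝ, (∀ i, u i = 0 ∨ u i = 1) → ∑ i, u i = (p : ℝ) →
          obj₂ p W u ≤ obj₂ p W v)) := by
  have hc : (0 : ℝ) < n / (p * (n - p)) := by
    have hp : (0 : ℝ) < p := by exact_mod_cast hp0
    have hpn' : (p : ℝ) < n := by exact_mod_cast hpn
    exact div_pos (hp.trans hpn') (mul_pos hp (sub_pos.mpr hpn'))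
  have key := obj₁_eq_mul_obj₂ hp0 hpn W
  refine ⟨key v hv01 hvp, forall_congr' fun u => imp_congr_right fun hu01 =>
    imp_congr_right fun hup => ?_⟩
  rw [key u hu01 hup, key v hv01 hvp, mul_le_mul_iff_right₀ hc]
end
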